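/- Let l₁, …, l_k be i.i.d. samples (k ≥ 2), l̄ their empirical mean, σ² their unbiased empirical variance. For any m > 0 and any c > 0, the following pointwise inequality holds on the event {σ ≠ 0}: k⁻¹ Σᵢ 𝟙(mσ ≤ l̄ - lᵢ) ≤ (k - 1 + k c²)/(k (m + c)²), and the right-hand side is minimized over c > 0 at c = (k-1)/(k m), where it equals (k-1)/(k m² + k - 1). -/

import Mathlib

/-!
Shifted Chebyshev argument: for `x = l̄ - lᵢ`, `𝟙(mσ ≤ x) ≤ (x + cσ)² / ((m + c)² σ²)` since both
sides of the threshold are positive after the shift by `cσ`. Summing, the cross terms vanish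
because `Σ (l̄ - lᵢ) = 0`, and `Σ (l̄ - lᵢ)² = (k - 1) σ²`, which gives `(k - 1 + k c²) / (m + c)²`.
Optimality of `c = (k - 1) / (k m)` is, cross-multiplied, `(k m c - (k - 1))² ≥ 0`.
-/

open Finset

lemma ite_le_sq_div_sq {t u x : ℝ} (htu : 0 < t + u) :
    (if t ≤ x then (1 : ℝ) else 0) ≤ (x + u) ^ 2 / (t + u) ^ 2 := by
  split_ifs with h
  · rw [one_le_div (by positivity)]
    exact pow_le_pow_left₀ htu.le (by linarith) 2
  · positivity

lemma sum_add_const_sq_of_sum_eq_zero {ι : Type*} (s : Finset ι) {x : ι → ℝ}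
    (hx : ∑ i ∈ s, x i = 0) (u : ℝ) :
    ∑ i ∈ s, (x i + u) ^ 2 = ∑ i ∈ s, x i ^ 2 + #s * u ^ 2 := by
  simp only [add_sq, sum_add_distrib, ← sum_mul, ← mul_sum, hx, sum_const, nsmul_eq_mul]
  ring

lemma sum_ite_le_div_sq_of_sum_eq_zero {ι : Type*} (s : Finset ι) {x : ι → ℝ}
    (hx : ∑ i ∈ s, x i = 0) {t u : ℝ} (htu : 0 < t + u) :
    ∑ i ∈ s, (if t ≤ x i then (1 : ℝ) else 0)
      ≤ (∑ i ∈ s, x i ^ 2 + #s * u ^ 2) / (t + u) ^ 2 :=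
  calc ∑ i ∈ s, (if t ≤ x i then (1 : ℝ) else 0)
      ≤ ∑ i ∈ s, (x i + u) ^ 2 / (t + u) ^ 2 := sum_le_sum fun _ _ ↦ ite_le_sq_div_sq htu
    _ = _ := by rw [← sum_div, sum_add_const_sq_of_sum_eq_zero s hx]

lemma sum_mean_sub_eq_zero {ι : Type*} [Fintype ι] [Nonempty ι] (l : ι → ℝ) :
    ∑ i, ((Fintype.card ι : ℝ)⁻¹ * ∑ j, l j - l i) = 0 := by
  rw [sum_sub_distrib, sum_const, card_univ, nsmul_eq_mul, ← mul_assoc,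
    mul_inv_cancel₀ (by positivity), one_mul, sub_self]

/-- With `a = k - 1` and `b = k` this is the bound of the theorem. -/
noncomputable def cantelliBound (a b m c : ℝ) : ℝ := (a + b * c ^ 2) / (b * (m + c) ^ 2)

lemma cantelliBound_minimizer {a b m : ℝ} (ha : 0 ≤ a) (hb : 0 < b) (hm : 0 < m) :
    cantelliBound a b m (a / (b * m)) = a / (b * m ^ 2 + a) := by
  have : b * m ^ 2 + a ≠ 0 := by positivity
  unfold cantelliBound
  field_simp

lemma div_le_cantelliBound {a b m : ℝ} (ha : 0 ≤ a) (hb : 0 < b) (hm : 0 < m) {c : ℝ}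
    (hc : m + c ≠ 0) : a / (b * m ^ 2 + a) ≤ cantelliBound a b m c := by
  rw [cantelliBound, div_le_div_iff₀ (by positivity) (by positivity)]
  nlinarith [sq_nonneg (b * m * c - a), mul_nonneg ha hb.le]

/-- Key deterministic inequality in the empirical Cantelli bound proof: on the event
`σ ≠ 0`, the empirical tail frequency is bounded by `(k - 1 + k c²)/(k (m + c)²)`,
which is minimized over `c > 0` at `c = (k-1)/(k m)`, with value `(k-1)/(k m² + k - 1)`. -/
theorem stmt_6 (k : ℕ) (hk : 2 ≤ k) (l : Fin k → ℝ)
    (lbar : ℝ) (hlbar : lbar = (k : ℝ)⁻¹ * ∑ i, l i)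
    (σv : ℝ)
    (hσv : σv = Real.sqrt (((k : ℝ) - 1)⁻¹ * ∑ i, (l i - lbar) ^ 2))
    (hσ : σv ≠ 0) (m c : ℝ) (hm : 0 < m) (hc : 0 < c) :
    ((k : ℝ)⁻¹ * ∑ i, (if m * σv ≤ lbar - l i then (1 : ℝ) else 0)
      ≤ ((k : ℝ) - 1 + k * c ^ 2) / (k * (m + c) ^ 2)) ∧
    (((k : ℝ) - 1 + k * (((k : ℝ) - 1) / (k * m)) ^ 2) /
        (k * (m + ((k : ℝ) - 1) / (k * m)) ^ 2)
      ≤ ((k : ℝ) - 1 + k * c ^ 2) / (k * (m + c) ^ 2)) ∧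
    (((k : ℝ) - 1 + k * (((k : ℝ) - 1) / (k * m)) ^ 2) /
        (k * (m + ((k : ℝ) - 1) / (k * m)) ^ 2)
      = ((k : ℝ) - 1) / (k * m ^ 2 + k - 1)) := by
  have hk1 : (0 : ℝ) < k - 1 := by
    have : (2 : ℝ) ≤ k := by exact_mod_cast hk
    linarith
  have hk0 : (0 : ℝ) < k := by linarith
  have hσpos : 0 < σv := (hσv ▸ Real.sqrt_nonneg _ : 0 ≤ σv).lt_of_ne' hσ
  have hmean : ∑ i, (lbar - l i) = 0 := by
    have : NeZero k := ⟨by omega⟩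
    simpa [hlbar] using sum_mean_sub_eq_zero l
  have hvar : ∑ i, (lbar - l i) ^ 2 = ((k : ℝ) - 1) * σv ^ 2 := by
    rw [hσv, Real.sq_sqrt (by positivity), ← mul_assoc, mul_inv_cancel₀ hk1.ne', one_mul]
    exact sum_congr rfl fun i _ ↦ by ring
  have hopt := cantelliBound_minimizer hk1.le hk0 hm
  have hle := div_le_cantelliBound hk1.le hk0 hm
    (c := c) (by positivity)
  rw [← hopt] at hle
  rw [add_sub_assoc]
  refine ⟨?_, hle, hopt⟩
  calc (k : ℝ)⁻¹ * ∑ i, (if m * σv ≤ lbar - l i then (1 : ℝ) else 0)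
      ≤ (k : ℝ)⁻¹ * ((∑ i, (lbar - l i) ^ 2 + #(univ : Finset (Fin k)) * (c * σv) ^ 2)
          / (m * σv + c * σv) ^ 2) := by
        gcongr
        exact sum_ite_le_div_sq_of_sum_eq_zero _ hmean (by positivity)
    _ = ((k : ℝ) - 1 + k * c ^ 2) / (k * (m + c) ^ 2) := by
        rw [hvar, card_univ, Fintype.card_fin]
        field_simp
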